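/- arXiv:1011.1797 — 5 statements merged into one kernel-verified Lean document; each statement's English description precedes it below -/
import Mathlib

section
/- Let Γ = (V,E) be a reflexive locally-finite k-separable graph and let A be a k-atom of Γ with |A| > k. Then for every x ∈ A, the set Γ⁻(x) ∩ A is not equal to {x}. -/
open Set

/-- Image of a set under a relation (graph). -/
def RelImage {V : Type*} (Γ : V → V → Prop) (X : Set V) : Set V := {y | ∃ x ∈ X, Γ x y}

/-- Reverse relation. -/
def RelRev {V : Type*} (Γ : V → V → Prop) : V → V → Prop := fun x y => Γ y x

/-- Boundary ∂(X) = Γ(X) \ X. -/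
def RelBoundary {V : Type*} (Γ : V → V → Prop) (X : Set V) : Set V := RelImage Γ X \ X

/-- Exterior ∇(X) = V \ Γ(X). -/
def RelNabla {V : Type*} (Γ : V → V → Prop) (X : Set V) : Set V := (RelImage Γ X)ᶜ

def RelReflexive {V : Type*} (Γ : V → V → Prop) : Prop := ∀ x, Γ x x

def RelLocallyFinite {V : Type*} (Γ : V → V → Prop) : Prop :=
  ∀ x : V, (RelImage Γ {x}).Finite ∧ (RelImage (RelRev Γ) {x}).Finite

/-- The family S_k(Γ): finite X with |X| ≥ k and at least k vertices outside Γ(X). -/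
def SkFam {V : Type*} (Γ : V → V → Prop) (k : ℕ) : Set (Set V) :=
  {X | X.Finite ∧ k ≤ X.ncard ∧ ∃ Y : Set V, Y.Finite ∧ Y.ncard = k ∧ Y ⊆ RelNabla Γ X}

def RelSeparable {V : Type*} (Γ : V → V → Prop) (k : ℕ) : Prop := (SkFam Γ k).Nonempty

/-- The k-isoperimetric connectivity κ_k(Γ). -/
noncomputable def relKappa {V : Type*} (Γ : V → V → Prop) (k : ℕ) : ℕ :=
  sInf ((fun X => (RelBoundary Γ X).ncard) '' SkFam Γ k)

def IsKFragment {V : Type*} (Γ : V → V → Prop) (k : ℕ) (X : Set V) : Prop :=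
  X ∈ SkFam Γ k ∧ (RelBoundary Γ X).ncard = relKappa Γ k

def IsKAtom {V : Type*} (Γ : V → V → Prop) (k : ℕ) (X : Set V) : Prop :=
  IsKFragment Γ k X ∧ ∀ Y, IsKFragment Γ k Y → X.ncard ≤ Y.ncard

/-- Γ is k-faithful: every k-atom A satisfies |A| ≤ |V \ Γ(A)|. -/
def KFaithful {V : Type*} (Γ : V → V → Prop) (k : ℕ) : Prop :=
  ∀ A, IsKAtom Γ k A → (RelNabla Γ A).Infinite ∨ A.ncard ≤ (RelNabla Γ A).ncard

/-!
If `x ∈ A` had no in-neighbour in `A` other than itself, then `x ∉ Γ(A \ {x})`, so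
`∂(A \ {x}) ⊆ ∂(A)`. For `|A| > k` the set `A \ {x}` still lies in `S_k`, hence it is a
`k`-fragment strictly smaller than the atom `A`.
-/

section

variable {V : Type*} {Γ : V → V → Prop} {k : ℕ}

theorem relImage_mono {X Y : Set V} (h : X ⊆ Y) : RelImage Γ X ⊆ RelImage Γ Y :=
  fun _ ⟨a, ha, hay⟩ => ⟨a, h ha, hay⟩

theorem RelLocallyFinite.relImage_finite (hlf : RelLocallyFinite Γ) {X : Set V}
    (hX : X.Finite) : (RelImage Γ X).Finite := by
  have hunion : RelImage Γ X = ⋃ a ∈ X, RelImage Γ {a} := by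
    ext y
    simp [RelImage]
  rw [hunion]
  exact hX.biUnion fun a _ => (hlf a).1

theorem relBoundary_diff_singleton_subset {X : Set V} {x : V}
    (hx : ∀ a ∈ X, Γ a x → a = x) : RelBoundary Γ (X \ {x}) ⊆ RelBoundary Γ X := by
  rintro y ⟨⟨a, ⟨haX, hax⟩, hay⟩, hyX'⟩
  have hyx : y ≠ x := by
    rintro rfl
    exact hax (hx a haX hay)
  exact ⟨⟨a, haX, hay⟩, fun hyX => hyX' ⟨hyX, hyx⟩⟩

theorem mem_skFam_of_subset {X X' : Set V} (hX : X ∈ SkFam Γ k) (hsub : X' ⊆ X)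
    (hk : k ≤ X'.ncard) : X' ∈ SkFam Γ k := by
  obtain ⟨hXfin, -, Y, hYfin, hYk, hYX⟩ := hX
  exact ⟨hXfin.subset hsub, hk, Y, hYfin, hYk,
    fun y hy hyX' => hYX hy (relImage_mono hsub hyX')⟩

theorem relKappa_le {X : Set V} (hX : X ∈ SkFam Γ k) :
    relKappa Γ k ≤ (RelBoundary Γ X).ncard :=
  Nat.sInf_le ⟨X, hX, rfl⟩

theorem IsKFragment.of_relBoundary_subset {X X' : Set V} (hX : IsKFragment Γ k X)
    (hfin : (RelBoundary Γ X).Finite) (hX' : X' ∈ SkFam Γ k)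
    (hsub : RelBoundary Γ X' ⊆ RelBoundary Γ X) : IsKFragment Γ k X' :=
  ⟨hX', le_antisymm (hX.2 ▸ ncard_le_ncard hsub hfin) (relKappa_le hX')⟩

theorem IsKAtom.exists_inNeighbour (hlf : RelLocallyFinite Γ) {A : Set V}
    (hA : IsKAtom Γ k A) (hcard : k < A.ncard) {x : V} (hxA : x ∈ A) :
    ∃ a ∈ A, Γ a x ∧ a ≠ x := by
  by_contra! hx
  obtain ⟨hfrag, hmin⟩ := hA
  have hAfin : A.Finite := hfrag.1.1
  have hcard' : (A \ {x}).ncard = A.ncard - 1 := ncard_sdiff_singleton_of_mem hxA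
  have hmem : A \ {x} ∈ SkFam Γ k := mem_skFam_of_subset hfrag.1 sdiff_subset (by omega)
  have hbdfin : (RelBoundary Γ A).Finite := (hlf.relImage_finite hAfin).sdiff
  have hfrag' : IsKFragment Γ k (A \ {x}) :=
    hfrag.of_relBoundary_subset hbdfin hmem (relBoundary_diff_singleton_subset hx)
  have := hmin _ hfrag'
  omega

end

theorem stmt1_general {V : Type*} (Γ : V → V → Prop) (k : ℕ)
    (hlf : RelLocallyFinite Γ)
    (A : Set V) (hA : IsKAtom Γ k A) (hcard : k < A.ncard) :
    ∀ x ∈ A, RelImage (RelRev Γ) {x} ∩ A ≠ {x} := by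
  intro x hxA hx
  obtain ⟨a, haA, hax, hne⟩ := hA.exists_inNeighbour hlf hcard hxA
  have ha : a ∈ RelImage (RelRev Γ) {x} ∩ A := ⟨⟨x, rfl, hax⟩, haA⟩
  rw [hx] at ha
  exact hne ha

theorem stmt1 {V : Type*} (Γ : V → V → Prop) (k : ℕ)
    (hrefl : RelReflexive Γ) (hlf : RelLocallyFinite Γ) (hsep : RelSeparable Γ k)
    (A : Set V) (hA : IsKAtom Γ k A) (hcard : k < A.ncard) :
    ∀ x ∈ A, RelImage (RelRev Γ) {x} ∩ A ≠ {x} :=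
  stmt1_general Γ k hlf A hA hcard
end

section
/- Let S be a finite generating subset of a group G with 1 ∈ S and S ≠ G, and consider the Cayley graph Cay(G,S). If Cay(G,S) is 1-faithful and H is a 1-atom of Cay(G,S) with 1 ∈ H, then H is a finite subgroup of G, and |H| divides κ₁(Cay(G,S)). -/
/-! Two intersecting 1-atoms A, B coincide: by submodularity
|(A ∪ B)S| + |(A ∩ B)S| ≤ |AS| + |BS|, and 1-faithfulness prevents (A ∪ B)S = G, so both A ∪ B
and A ∩ B lie in S₁, which forces A ∩ B to be a 1-fragment, hence equal to A and to B.
Left translates of an atom are atoms, so hH = H for every h ∈ H, making H a subgroup. Finally HS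
is a union of right cosets of H, so |H| divides |HS| − |H| = κ₁. -/

open Set Pointwise

/-- S_1 for the Cayley graph Γ(X) = XS: finite nonempty X with |XS| ≤ |G| − 1. -/
def S1Mul {G : Type*} [Group G] (S : Set G) : Set (Set G) :=
  {X | X.Nonempty ∧ X.Finite ∧ ∃ y, y ∉ X * S}

noncomputable def kappa1Mul {G : Type*} [Group G] (S : Set G) : ℕ :=
  sInf ((fun X => (X * S).ncard - X.ncard) '' S1Mul S)

def Is1FragmentMul {G : Type*} [Group G] (S X : Set G) : Prop :=
  X ∈ S1Mul S ∧ (X * S).ncard - X.ncard = kappa1Mul S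

def Is1AtomMul {G : Type*} [Group G] (S X : Set G) : Prop :=
  Is1FragmentMul S X ∧ ∀ Y, Is1FragmentMul S Y → X.ncard ≤ Y.ncard

/-- The Cayley graph of S is 1-faithful: a 1-atom A satisfies |A| ≤ |G \ AS|. -/
def Faithful1Mul {G : Type*} [Group G] (S : Set G) : Prop :=
  ∀ A : Set G, Is1AtomMul S A → ((A * S)ᶜ).Infinite ∨ A.ncard ≤ ((A * S)ᶜ).ncard

section Pointwise

variable {G : Type*} [Group G]

lemma Set.ncard_union_mul_add_ncard_inter_mul_le {A B S : Set G} (hA : A.Finite)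
    (hB : B.Finite) (hS : S.Finite) :
    ((A ∪ B) * S).ncard + ((A ∩ B) * S).ncard ≤ (A * S).ncard + (B * S).ncard := by
  have hAS := hA.mul hS
  calc ((A ∪ B) * S).ncard + ((A ∩ B) * S).ncard
      ≤ (A * S ∪ B * S).ncard + (A * S ∩ (B * S)).ncard := by
        rw [union_mul]
        gcongr
        exacts [hAS.inter_of_left _, inter_mul_subset]
    _ = (A * S).ncard + (B * S).ncard := ncard_union_add_ncard_inter _ _ hAS (hB.mul hS)

lemma Set.exists_subgroup_eq_of_smul_eq {H : Set G} (h1H : (1 : G) ∈ H)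
    (hH : ∀ a ∈ H, a • H = H) : ∃ K : Subgroup G, H = K := by
  have mul_mem {a b : G} (ha : a ∈ H) (hb : b ∈ H) : a * b ∈ H :=
    hH a ha ▸ smul_mem_smul_set hb
  have inv_mem {a : G} (ha : a ∈ H) : a⁻¹ ∈ H := by
    have hinv : a⁻¹ • H = H := inv_smul_eq_iff.mpr (hH a ha).symm
    simpa [hinv] using smul_mem_smul_set (a := a⁻¹) h1H
  exact ⟨{ carrier := H, mul_mem' := mul_mem, one_mem' := h1H, inv_mem' := inv_mem }, rfl⟩

lemma Subgroup.ncard_dvd_ncard_mul (K : Subgroup G) {X : Set G} (hK : (K : Set G).Finite)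
    (hX : X.Finite) : (K : Set G).ncard ∣ ((K : Set G) * X).ncard := by
  classical
  obtain ⟨k, hk⟩ := hK.exists_finset_coe
  obtain ⟨x, rfl⟩ := hX.exists_finset_coe
  rw [← hk, ← Finset.coe_mul, Set.ncard_coe_finset, Set.ncard_coe_finset]
  refine Finset.card_dvd_card_mul_left ?_
  rintro _ ⟨b, -, rfl⟩ _ ⟨c, -, rfl⟩ hne
  have mem_k (r : G) : r ∈ k ↔ r ∈ K := by rw [← Finset.mem_coe, hk, SetLike.mem_coe]
  refine Finset.disjoint_left.mpr fun z hzb hzc => hne ?_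
  obtain ⟨p, hp, rfl⟩ := Finset.mem_image.mp hzb
  obtain ⟨q, hq, hqc⟩ := Finset.mem_image.mp hzc
  have hb : b = (p⁻¹ * q) * c := by rw [mul_assoc, hqc, inv_mul_cancel_left]
  have hpq : p⁻¹ * q ∈ K := K.mul_mem (K.inv_mem ((mem_k p).mp hp)) ((mem_k q).mp hq)
  ext w
  simp only [Finset.mem_image, mem_k, hb]
  exact ⟨fun ⟨r, hr, hw⟩ => ⟨r * (p⁻¹ * q), K.mul_mem hr hpq, by rw [← hw]; group⟩,
    fun ⟨r, hr, hw⟩ => ⟨r * (p⁻¹ * q)⁻¹, K.mul_mem hr (K.inv_mem hpq), by rw [← hw]; group⟩⟩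

end Pointwise

section Atoms

variable {G : Type*} [Group G] {S A B : Set G}

lemma Is1AtomMul.finite (hA : Is1AtomMul S A) : A.Finite :=
  hA.1.1.2.1

lemma smul_mem_S1Mul (g : G) (hA : A ∈ S1Mul S) : g • A ∈ S1Mul S := by
  obtain ⟨hne, hfin, y, hy⟩ := hA
  refine ⟨hne.smul_set, hfin.smul_set, g • y, ?_⟩
  rwa [smul_mul_assoc, Set.smul_mem_smul_set_iff]

lemma Is1AtomMul.smul (hA : Is1AtomMul S A) (g : G) : Is1AtomMul S (g • A) := by
  refine ⟨⟨smul_mem_S1Mul g hA.1.1, ?_⟩, fun Y hY => ?_⟩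
  · rw [smul_mul_assoc, Set.ncard_smul_set, Set.ncard_smul_set, hA.1.2]
  · rw [Set.ncard_smul_set]
    exact hA.2 Y hY

lemma ncard_add_kappa1Mul_le (hS : S.Finite) (h1 : (1 : G) ∈ S) (hA : A ∈ S1Mul S) :
    A.ncard + kappa1Mul S ≤ (A * S).ncard := by
  have hsub : A.ncard ≤ (A * S).ncard :=
    Set.ncard_le_ncard (Set.subset_mul_left A h1) (hA.2.1.mul hS)
  have hκ : kappa1Mul S ≤ (A * S).ncard - A.ncard := Nat.sInf_le ⟨A, hA, rfl⟩
  omega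

lemma Is1FragmentMul.ncard_mul_eq (hS : S.Finite) (h1 : (1 : G) ∈ S)
    (hA : Is1FragmentMul S A) : (A * S).ncard = A.ncard + kappa1Mul S := by
  have := ncard_add_kappa1Mul_le hS h1 hA.1
  have := hA.2
  omega

lemma inter_mem_S1Mul (hA : A ∈ S1Mul S) (hAB : (A ∩ B).Nonempty) : A ∩ B ∈ S1Mul S := by
  obtain ⟨-, hfin, y, hy⟩ := hA
  exact ⟨hAB, hfin.inter_of_left B, y, fun hy' => hy (Set.mul_subset_mul_right
    Set.inter_subset_left hy')⟩

variable (hS : S.Finite) (h1 : (1 : G) ∈ S)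
include hS h1

lemma Is1AtomMul.union_mem_S1Mul (hfaith : Faithful1Mul S) (hA : Is1AtomMul S A)
    (hB : Is1AtomMul S B) (hAB : (A ∩ B).Nonempty) : A ∪ B ∈ S1Mul S := by
  refine ⟨hAB.mono Set.inter_subset_left |>.mono Set.subset_union_left,
    hA.finite.union hB.finite, ?_⟩
  -- If (A ∪ B)S = G, then |G| ≥ |AS| + |A| by faithfulness, which submodularity contradicts.
  by_contra! hcover
  have : Finite G := Set.finite_univ_iff.mp <|
    Set.eq_univ_of_forall hcover ▸ (hA.finite.union hB.finite).mul hS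
  have hcompl : A.ncard ≤ ((A * S)ᶜ).ncard := (hfaith A hA).resolve_left (· (Set.toFinite _))
  have hsplit := Set.ncard_add_ncard_compl (A * S)
  have hcover' : ((A ∪ B) * S).ncard = Nat.card G := by
    rw [Set.eq_univ_of_forall hcover, Set.ncard_univ]
  have hsubmod := Set.ncard_union_mul_add_ncard_inter_mul_le hA.finite hB.finite hS
  have hinter := ncard_add_kappa1Mul_le hS h1 (inter_mem_S1Mul hA.1.1 hAB)
  have hpos : 0 < (A ∩ B).ncard := (Set.ncard_pos (hA.finite.inter_of_left B)).mpr hAB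
  have hAS := hA.1.ncard_mul_eq hS h1
  have hBS := hB.1.ncard_mul_eq hS h1
  have hAB_card : A.ncard = B.ncard := le_antisymm (hA.2 B hB.1) (hB.2 A hA.1)
  omega

lemma Is1AtomMul.eq_of_inter_nonempty (hfaith : Faithful1Mul S) (hA : Is1AtomMul S A)
    (hB : Is1AtomMul S B) (hAB : (A ∩ B).Nonempty) : A = B := by
  have hfrag : Is1FragmentMul S (A ∩ B) := by
    refine ⟨inter_mem_S1Mul hA.1.1 hAB, ?_⟩
    have hunion := ncard_add_kappa1Mul_le hS h1 (hA.union_mem_S1Mul hS h1 hfaith hB hAB)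
    have hinter := ncard_add_kappa1Mul_le hS h1 (inter_mem_S1Mul hA.1.1 hAB)
    have hsubmod := Set.ncard_union_mul_add_ncard_inter_mul_le hA.finite hB.finite hS
    have hcard := Set.ncard_union_add_ncard_inter A B hA.finite hB.finite
    have hAS := hA.1.ncard_mul_eq hS h1
    have hBS := hB.1.ncard_mul_eq hS h1
    omega
  calc A = A ∩ B := (Set.eq_of_subset_of_ncard_le Set.inter_subset_left (hA.2 _ hfrag)
        hA.finite).symm
    _ = B := Set.eq_of_subset_of_ncard_le Set.inter_subset_right (hB.2 _ hfrag) hB.finite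

end Atoms

theorem stmt6_general {G : Type*} [Group G] (S : Set G) (hSfin : S.Finite) (h1 : (1 : G) ∈ S)
    (hfaith : Faithful1Mul S)
    (H : Set G) (hH : Is1AtomMul S H) (h1H : (1 : G) ∈ H) :
    (∃ H' : Subgroup G, H = ↑H') ∧ H.ncard ∣ kappa1Mul S := by
  have htranslate (h : G) (hh : h ∈ H) : h • H = H :=
    (hH.smul h).eq_of_inter_nonempty hSfin h1 hfaith hH
      ⟨h, by simpa using Set.smul_mem_smul_set (a := h) h1H, hh⟩
  obtain ⟨K, rfl⟩ := Set.exists_subgroup_eq_of_smul_eq h1H htranslate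
  refine ⟨⟨K, rfl⟩, ?_⟩
  rw [← hH.1.2]
  exact Nat.dvd_sub (K.ncard_dvd_ncard_mul hH.finite hSfin) dvd_rfl

theorem stmt6 {G : Type*} [Group G] (S : Set G) (hSfin : S.Finite) (h1 : (1 : G) ∈ S)
    (hgen : Subgroup.closure S = ⊤) (hproper : S ≠ Set.univ)
    (hfaith : Faithful1Mul S)
    (H : Set G) (hH : Is1AtomMul S H) (h1H : (1 : G) ∈ H) :
    (∃ H' : Subgroup G, H = ↑H') ∧ H.ncard ∣ kappa1Mul S :=
  stmt6_general S hSfin h1 hfaith H hH h1H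
end

section
/- Let G be an abelian group and S a finite generating subset of G with 0 ∈ S such that the Cayley graph Cay(G,S) is k-separable. Then Cay(G,S) is k-faithful; in particular, if H is a 1-atom containing 0, then H is a subgroup of G. -/
open Set Pointwise

/-- The family S_k for the Cayley graph Γ(X) = X + S in an abelian group:
finite X with |X| ≥ k and at least k elements outside X + S. -/
def SkAdd {G : Type*} [AddCommGroup G] (S : Set G) (k : ℕ) : Set (Set G) :=
  {X | X.Finite ∧ k ≤ X.ncard ∧ ∃ Y : Set G, Y.Finite ∧ Y.ncard = k ∧ Y ⊆ (X + S)ᶜ}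

/-- S is k-separable. -/
def SepAdd {G : Type*} [AddCommGroup G] (S : Set G) (k : ℕ) : Prop := (SkAdd S k).Nonempty

/-- The k-isoperimetric connectivity κ_k(S). -/
noncomputable def kappaAdd {G : Type*} [AddCommGroup G] (S : Set G) (k : ℕ) : ℕ :=
  sInf ((fun X => (X + S).ncard - X.ncard) '' SkAdd S k)

/-- X is a k-fragment of S. -/
def IsFragAdd {G : Type*} [AddCommGroup G] (S : Set G) (k : ℕ) (X : Set G) : Prop :=
  X ∈ SkAdd S k ∧ (X + S).ncard - X.ncard = kappaAdd S k

/-- X is a k-atom of S. -/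
def IsAtomAdd {G : Type*} [AddCommGroup G] (S : Set G) (k : ℕ) (X : Set G) : Prop :=
  IsFragAdd S k X ∧ ∀ Y, IsFragAdd S k Y → X.ncard ≤ Y.ncard

/-- S is k-faithful: any k-atom A satisfies |A| ≤ |G \ (A + S)|. -/
def FaithfulAdd {G : Type*} [AddCommGroup G] (S : Set G) (k : ℕ) : Prop :=
  ∀ A : Set G, IsAtomAdd S k A → ((A + S)ᶜ).Infinite ∨ A.ncard ≤ ((A + S)ᶜ).ncard

/-- A is an arithmetic progression {a, a+d, ..., a+md}. -/
def IsAP {G : Type*} [AddCommGroup G] (A : Set G) : Prop :=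
  ∃ a d : G, ∃ m : ℕ, A = (fun i : ℕ => a + i • d) '' {i | i ≤ m}

/-- S is a Vosper subset: non-2-separable or κ₂(S) ≥ |S|. -/
def IsVosper {G : Type*} [AddCommGroup G] (S : Set G) : Prop :=
  ¬ SepAdd S 2 ∨ S.ncard ≤ kappaAdd S 2

/-- H is a hyper-atom of S: a subgroup which is a 1-fragment, of maximal cardinality
among subgroups which are 1-fragments. -/
def IsHyperAtom {G : Type*} [AddCommGroup G] (S : Set G) (H : AddSubgroup G) : Prop :=
  IsFragAdd S 1 ↑H ∧
    ∀ K : AddSubgroup G, IsFragAdd S 1 ↑K → (K : Set G).ncard ≤ (H : Set G).ncard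

/-- C is an H-component of S: a non-empty set of the form S ∩ (x + H). -/
def IsComponent {G : Type*} [AddCommGroup G] (H : AddSubgroup G) (S C : Set G) : Prop :=
  C.Nonempty ∧ ∃ x : G, C = S ∩ ({x} + (H : Set G))

/-- C is a smaller H-component of S: an H-component of minimal cardinality. -/
def IsSmallerComponent {G : Type*} [AddCommGroup G] (H : AddSubgroup G) (S C : Set G) : Prop :=
  IsComponent H S C ∧ ∀ C', IsComponent H S C' → C.ncard ≤ C'.ncard

/-- The k-fold sumset kS = S + ⋯ + S (with 0S = {0}). -/
def iterSum {G : Type*} [AddCommGroup G] (S : Set G) : ℕ → Set G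
  | 0 => {0}
  | n + 1 => iterSum S n + S

/-- A is aperiodic: its period {x : x + A = A} is trivial. -/
def IsAperiodic {G : Type*} [AddCommGroup G] (A : Set G) : Prop :=
  ∀ x : G, {x} + A = A → x = 0

/-!
Since `G` is abelian, `-(X + S)ᶜ + S` misses `-X`. So for finite `G` the dual
`X* = -(X + S)ᶜ` of a member `X` of `S_k` is again in `S_k`, with
`|X* + S| - |X*| ≤ |X + S| - |X|`. Applied to a `k`-atom `A`, the dual is a `k`-fragment of
size `|G \ (A + S)|`, which gives faithfulness. Faithfulness in turn shows that two intersecting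
`1`-atoms `A`, `B` leave a point outside `(A ∪ B) + S`, so submodularity of `X ↦ |X + S|` makes
`A ∩ B` a `1`-fragment and forces `A = B`. A `1`-atom `H` containing `0` therefore equals each
of its translates `h + H` with `h ∈ H`, hence is a subgroup.
-/

section CayleyGraph

variable {G : Type*} [AddCommGroup G] {S : Set G} {k : ℕ}

lemma mem_SkAdd_of_subset {X Y : Set G} (hX : X ∈ SkAdd S k) (hYX : Y ⊆ X)
    (hY : k ≤ Y.ncard) : Y ∈ SkAdd S k := by
  obtain ⟨hXf, -, Z, hZf, hZk, hZ⟩ := hX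
  exact ⟨hXf.subset hYX, hY, Z, hZf, hZk,
    hZ.trans (compl_subset_compl.mpr (add_subset_add_right hYX))⟩

lemma mem_SkAdd_one_iff {X : Set G} :
    X ∈ SkAdd S 1 ↔ X.Finite ∧ X.Nonempty ∧ (X + S)ᶜ.Nonempty := by
  refine and_congr_right fun hX => and_congr (Nat.succ_le_iff.trans (ncard_pos hX)) ?_
  constructor
  · rintro ⟨Y, -, hY, hYX⟩
    obtain ⟨y, rfl⟩ := ncard_eq_one.mp hY
    exact ⟨y, hYX rfl⟩
  · rintro ⟨y, hy⟩
    exact ⟨{y}, finite_singleton y, ncard_singleton y, singleton_subset_iff.mpr hy⟩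

lemma mem_SkAdd_iff_of_finite [Finite G] {X : Set G} :
    X ∈ SkAdd S k ↔ k ≤ X.ncard ∧ k ≤ (X + S)ᶜ.ncard := by
  refine ⟨fun ⟨_, hX, Y, _, hY, hYX⟩ => ⟨hX, hY ▸ ncard_le_ncard hYX⟩, ?_⟩
  rintro ⟨hX, hXS⟩
  obtain ⟨Y, hYX, hY⟩ := exists_subset_card_eq hXS
  exact ⟨toFinite X, hX, Y, toFinite Y, hY, hYX⟩

lemma vadd_mem_SkAdd {X : Set G} (g : G) (hX : X ∈ SkAdd S k) : g +ᵥ X ∈ SkAdd S k := by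
  obtain ⟨hXf, hXk, Y, hYf, hYk, hY⟩ := hX
  refine ⟨hXf.vadd_set, by rwa [ncard_vadd_set], g +ᵥ Y, hYf.vadd_set,
    by rwa [ncard_vadd_set], ?_⟩
  rw [vadd_add_assoc, ← vadd_set_compl]
  exact vadd_set_mono hY

lemma kappaAdd_le {X : Set G} (hX : X ∈ SkAdd S k) : kappaAdd S k ≤ (X + S).ncard - X.ncard :=
  Nat.sInf_le ⟨X, hX, rfl⟩

lemma isFragAdd_of_le {X : Set G} (hX : X ∈ SkAdd S k)
    (h : (X + S).ncard - X.ncard ≤ kappaAdd S k) : IsFragAdd S k X :=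
  ⟨hX, le_antisymm h (kappaAdd_le hX)⟩

lemma IsAtomAdd.vadd {X : Set G} (g : G) (hX : IsAtomAdd S k X) : IsAtomAdd S k (g +ᵥ X) := by
  obtain ⟨⟨hXS, hXfrag⟩, hmin⟩ := hX
  refine ⟨⟨vadd_mem_SkAdd g hXS, ?_⟩, fun Y hY => ?_⟩
  · rwa [vadd_add_assoc, ncard_vadd_set, ncard_vadd_set]
  · rw [ncard_vadd_set]
    exact hmin Y hY

lemma ncard_le_ncard_add_of_zero_mem (h0 : (0 : G) ∈ S) {X : Set G} (hXS : (X + S).Finite) :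
    X.ncard ≤ (X + S).ncard :=
  ncard_le_ncard (subset_add_left X h0) hXS

lemma ncard_inter_add_add_ncard_union_add_le {A B : Set G} (hA : A.Finite) (hB : B.Finite)
    (hS : S.Finite) :
    ((A ∩ B) + S).ncard + ((A ∪ B) + S).ncard ≤ (A + S).ncard + (B + S).ncard := by
  rw [union_add, ← ncard_union_add_ncard_inter _ _ (hA.add hS) (hB.add hS), add_comm]
  exact Nat.add_le_add_left
    (ncard_le_ncard inter_add_subset ((hA.add hS).inter_of_left _)) _

lemma neg_compl_add_subset_compl_neg (X : Set G) : -(X + S)ᶜ + S ⊆ (-X)ᶜ := by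
  rintro _ ⟨y, hy, s, hs, rfl⟩ hyX
  exact hy ⟨-(y + s), hyX, s, hs, by simp⟩

section Finite

variable [Finite G]

lemma neg_compl_add_mem_SkAdd {X : Set G} (hX : X ∈ SkAdd S k) : -(X + S)ᶜ ∈ SkAdd S k := by
  obtain ⟨hXk, hXSk⟩ := mem_SkAdd_iff_of_finite.mp hX
  refine mem_SkAdd_iff_of_finite.mpr ⟨by rwa [ncard_neg], ?_⟩
  calc k ≤ X.ncard := hXk
    _ = (-X).ncard := (ncard_neg X).symm
    _ ≤ (-(X + S)ᶜ + S)ᶜ.ncard :=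
      ncard_le_ncard (subset_compl_comm.mp (neg_compl_add_subset_compl_neg X))

lemma ncard_neg_compl_add_sub_le (X : Set G) :
    (-(X + S)ᶜ + S).ncard - (-(X + S)ᶜ).ncard ≤ (X + S).ncard - X.ncard := by
  have hsub := ncard_le_ncard (neg_compl_add_subset_compl_neg (S := S) X)
  have hX := ncard_add_ncard_compl (-X)
  have hXS := ncard_add_ncard_compl (X + S)
  rw [ncard_neg] at hX ⊢
  omega

lemma IsAtomAdd.ncard_le_ncard_compl {A : Set G} (hA : IsAtomAdd S k A) :
    A.ncard ≤ (A + S)ᶜ.ncard := by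
  have hD := isFragAdd_of_le (neg_compl_add_mem_SkAdd hA.1.1)
    ((ncard_neg_compl_add_sub_le A).trans_eq hA.1.2)
  simpa only [ncard_neg] using hA.2 _ hD

end Finite

lemma faithfulAdd (hS : S.Finite) : FaithfulAdd S k := by
  intro A hA
  rw [or_iff_not_imp_left, not_infinite]
  intro hcompl
  have : Finite G := finite_univ_iff.mp (by simpa using (hA.1.1.1.add hS).union hcompl)
  exact hA.ncard_le_ncard_compl

lemma IsAtomAdd.compl_union_add_nonempty (hS : S.Finite) (h0 : (0 : G) ∈ S) {A B : Set G}
    (hA : IsAtomAdd S 1 A) (hB : IsAtomAdd S 1 B) (hAB : (A ∩ B).Nonempty) :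
    ((A ∪ B) + S)ᶜ.Nonempty := by
  by_contra hU
  rw [not_nonempty_iff_eq_empty, compl_empty_iff] at hU
  have hAf := hA.1.1.1
  have hBf := hB.1.1.1
  have : Finite G := finite_univ_iff.mp (hU ▸ (hAf.union hBf).add hS)
  have hIpos := (ncard_pos (hAf.inter_of_left B)).mpr hAB
  have hI := kappaAdd_le (mem_SkAdd_of_subset hA.1.1 inter_subset_left hIpos)
  have hIA := ncard_le_ncard_add_of_zero_mem h0 (toFinite ((A ∩ B) + S))
  have hsub := ncard_inter_add_add_ncard_union_add_le hAf hBf hS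
  have hAc := ncard_add_ncard_compl (A + S)
  have hBc := ncard_add_ncard_compl (B + S)
  rw [hU, ncard_univ] at hsub
  -- Faithfulness gives `|A + S| ≤ |G| - |A|`, and `|(A ∩ B) + S| > κ = |A + S| - |A|`;
  -- with the same for `B` this contradicts `|G| ≤ |A + S| + |B + S| - |(A ∩ B) + S|`.
  have := hA.ncard_le_ncard_compl
  have := hB.ncard_le_ncard_compl
  have := hA.1.2
  have := hB.1.2
  omega

lemma isFragAdd_inter (hS : S.Finite) (h0 : (0 : G) ∈ S) {A B : Set G}
    (hA : IsFragAdd S 1 A) (hB : IsFragAdd S 1 B) (hAB : (A ∩ B).Nonempty)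
    (hU : ((A ∪ B) + S)ᶜ.Nonempty) : IsFragAdd S 1 (A ∩ B) := by
  have hAf := hA.1.1
  have hBf := hB.1.1
  refine isFragAdd_of_le (mem_SkAdd_one_iff.mpr ⟨hAf.inter_of_left B, hAB, ?_⟩) ?_
  · exact hU.mono (compl_subset_compl.mpr (add_subset_add_right
      (inter_subset_left.trans subset_union_left)))
  have hUk := kappaAdd_le (mem_SkAdd_one_iff.mpr
    ⟨hAf.union hBf, hAB.mono (inter_subset_left.trans subset_union_left), hU⟩)
  have hsub := ncard_inter_add_add_ncard_union_add_le hAf hBf hS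
  have hcard := ncard_inter_add_ncard_union A B hAf hBf
  have := ncard_le_ncard_add_of_zero_mem h0 (hAf.add hS)
  have := ncard_le_ncard_add_of_zero_mem h0 (hBf.add hS)
  have := ncard_le_ncard_add_of_zero_mem h0 ((hAf.inter_of_left B).add hS)
  have := ncard_le_ncard_add_of_zero_mem h0 ((hAf.union hBf).add hS)
  have := hA.2
  have := hB.2
  omega

theorem IsAtomAdd.eq_of_inter_nonempty (hS : S.Finite) (h0 : (0 : G) ∈ S) {A B : Set G}
    (hA : IsAtomAdd S 1 A) (hB : IsAtomAdd S 1 B) (hAB : (A ∩ B).Nonempty) : A = B := by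
  have hI := isFragAdd_inter hS h0 hA.1 hB.1 hAB (hA.compl_union_add_nonempty hS h0 hB hAB)
  rw [← eq_of_subset_of_ncard_le inter_subset_left (hA.2 _ hI) hA.1.1.1,
    eq_of_subset_of_ncard_le inter_subset_right (hB.2 _ hI) hB.1.1.1]

theorem IsAtomAdd.exists_addSubgroup_eq (hS : S.Finite) (h0 : (0 : G) ∈ S) {H : Set G}
    (hH : IsAtomAdd S 1 H) (h0H : (0 : G) ∈ H) : ∃ H' : AddSubgroup G, H = H' := by
  have hvadd : ∀ h ∈ H, h +ᵥ H = H := fun h hh =>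
    have hh' : h ∈ h +ᵥ H := by simpa using vadd_mem_vadd_set (a := h) h0H
    (hH.vadd h).eq_of_inter_nonempty hS h0 hH ⟨h, hh', hh⟩
  refine ⟨{ carrier := H, add_mem' := ?_, zero_mem' := h0H, neg_mem' := ?_ }, rfl⟩
  · intro a b ha hb
    rw [← hvadd a ha]
    exact vadd_mem_vadd_set hb
  · intro a ha
    have h0a : (0 : G) ∈ a +ᵥ H := (hvadd a ha).symm ▸ h0H
    simpa [mem_vadd_set_iff_neg_vadd_mem] using h0a

end CayleyGraph

theorem stmt7_general {G : Type*} [AddCommGroup G] (S : Set G) (hfin : S.Finite)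
    (h0 : (0 : G) ∈ S) (k : ℕ) :
    FaithfulAdd S k ∧
    ∀ H : Set G, IsAtomAdd S 1 H → (0 : G) ∈ H → ∃ H' : AddSubgroup G, H = ↑H' :=
  ⟨faithfulAdd hfin, fun _ hH h0H => hH.exists_addSubgroup_eq hfin h0 h0H⟩

theorem stmt7 {G : Type*} [AddCommGroup G] (S : Set G) (hfin : S.Finite)
    (h0 : (0 : G) ∈ S) (hgen : AddSubgroup.closure S = ⊤)
    (k : ℕ) (hk : 1 ≤ k) (hsep : SepAdd S k) :
    FaithfulAdd S k ∧
    ∀ H : Set G, IsAtomAdd S 1 H → (0 : G) ∈ H → ∃ H' : AddSubgroup G, H = ↑H' :=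
  stmt7_general S hfin h0 k
end

section
/- Let G be an abelian group, S a finite generating subset with 0 ∈ S, H a non-zero subgroup of G which is a 1-fragment of S (so |S+H| − |H| = κ₁(S) ≤ |S|−1), and let S₀ be a smaller H-component of S. Then (S \ S₀) + S = (S \ S₀) + H + S, and S − S + H = S − S. -/
open Set Pointwise

/-! Since `|H + S| < |S| + |H|` and `H + S` is the disjoint union of the cosets of `H` meeting `S`,
any two distinct `H`-components of `S` have more than `|H|` elements together. By pigeonhole, sets
`A ⊆ x + H` and `B ⊆ y + H` with `|A| + |B| > |H|` satisfy `A + B = x + y + H` and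
`A - B = x - y + H`.
As `S₀` is a smallest component, a component other than `S₀` pairs in this way with every
component, including itself. Differences inside the coset of `S₀` lie in `H = C - C` for any other
component `C`, which exists because `S` generates `G` while `H ≠ G`. -/

lemma Set.nonempty_inter_of_subset_of_ncard_lt_ncard_add_ncard {α : Type*} {A B K : Set α}
    (hK : K.Finite) (hA : A ⊆ K) (hB : B ⊆ K) (h : K.ncard < A.ncard + B.ncard) :
    (A ∩ B).Nonempty := by
  rw [← ncard_pos (hK.subset (inter_subset_left.trans hA))]
  have := ncard_le_ncard (union_subset hA hB) hK
  have := ncard_union_add_ncard_inter A B (hK.subset hA) (hK.subset hB)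
  omega

section Cosets

variable {G : Type*} [AddCommGroup G] {H : AddSubgroup G} {S C S₀ : Set G}

lemma mem_singleton_add_addSubgroup_iff {x y : G} : y ∈ {x} + (H : Set G) ↔ y - x ∈ H := by
  simp [neg_add_eq_sub]

lemma ncard_singleton_add (x : G) (A : Set G) : ({x} + A).ncard = A.ncard := by
  rw [singleton_add]
  exact ncard_image_of_injective _ (add_right_injective x)

lemma singleton_add_addSubgroup_subset_add {s : G} (hs : s ∈ S) :
    {s} + (H : Set G) ⊆ H + S := by
  rw [add_comm]
  exact add_subset_add_left (singleton_subset_iff.mpr hs)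

lemma disjoint_singleton_add_addSubgroup {s s' : G} (h : s - s' ∉ H) :
    Disjoint ({s} + (H : Set G)) ({s'} + H) := by
  refine disjoint_left.mpr fun z hz hz' => h ?_
  rw [mem_singleton_add_addSubgroup_iff] at hz hz'
  simpa using H.sub_mem hz' hz

lemma IsComponent.eq_inter_singleton_add (hC : IsComponent H S C) {s : G}
    (hs : s ∈ C) : C = S ∩ ({s} + H) := by
  obtain ⟨-, x, rfl⟩ := hC
  have hsx : s - x ∈ H := mem_singleton_add_addSubgroup_iff.mp hs.2
  ext z
  simp only [mem_inter_iff, mem_singleton_add_addSubgroup_iff, and_congr_right_iff]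
  refine fun _ => ⟨fun hz => ?_, fun hz => ?_⟩
  · simpa using H.sub_mem hz hsx
  · simpa using H.add_mem hz hsx

lemma add_mem_add_of_lt_ncard_inter_add_ncard_inter (hH : (H : Set G).Finite) {A B : Set G}
    {x y g : G} (hcard : (H : Set G).ncard < (A ∩ ({x} + H)).ncard + (B ∩ ({y} + H)).ncard)
    (hg : g - (x + y) ∈ H) : g ∈ A + B := by
  set B' := B ∩ ({y} + H)
  have hcoset : ({x} + (H : Set G)).Finite := by rw [singleton_add]; exact hH.image _
  have hB' : {g} + -B' ⊆ {x} + (H : Set G) := by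
    rw [singleton_add]
    rintro _ ⟨c, ⟨-, hc⟩, rfl⟩
    rw [mem_singleton_add_addSubgroup_iff] at hc ⊢
    have : g + c - x = (g - (x + y)) - (-c - y) := by abel
    exact this ▸ H.sub_mem hg hc
  have hB'card : ({g} + -B').ncard = B'.ncard := by rw [ncard_singleton_add, ncard_neg]
  obtain ⟨a, ⟨ha, -⟩, hga⟩ :=
    nonempty_inter_of_subset_of_ncard_lt_ncard_add_ncard hcoset
      (inter_subset_right (s := A)) hB' (by rwa [hB'card, ncard_singleton_add])
  rw [singleton_add] at hga
  obtain ⟨c, ⟨hc, -⟩, rfl⟩ := hga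
  have : g = g + c + -c := by abel
  exact this ▸ add_mem_add ha hc

lemma neg_inter_singleton_add_addSubgroup (B : Set G) (y : G) :
    -(B ∩ ({y} + (H : Set G))) = -B ∩ ({-y} + H) := by
  ext z
  simp only [mem_neg, mem_inter_iff, mem_singleton_add_addSubgroup_iff]
  rw [← H.neg_mem_iff]
  simp [add_comm]

lemma sub_mem_sub_of_lt_ncard_inter_add_ncard_inter (hH : (H : Set G).Finite) {A B : Set G}
    {x y g : G} (hcard : (H : Set G).ncard < (A ∩ ({x} + H)).ncard + (B ∩ ({y} + H)).ncard)
    (hg : g - (x - y) ∈ H) : g ∈ A - B := by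
  rw [sub_eq_add_neg x] at hg
  rw [sub_eq_add_neg]
  refine add_mem_add_of_lt_ncard_inter_add_ncard_inter hH ?_ hg
  rwa [← neg_inter_singleton_add_addSubgroup, ncard_neg]

lemma IsComponent.sub_mem (hC : IsComponent H S C) {a b : G} (ha : a ∈ C)
    (hb : b ∈ C) : a - b ∈ H := by
  rw [hC.eq_inter_singleton_add hb] at ha
  exact mem_singleton_add_addSubgroup_iff.mp ha.2

lemma IsComponent.diff_inter_singleton_add (hC : IsComponent H S C) {a : G}
    (ha : a ∈ S \ C) : (S \ C) ∩ ({a} + H) = S ∩ ({a} + H) := by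
  refine (inter_subset_inter_left _ sdiff_subset).antisymm fun z ⟨hzS, hza⟩ =>
    ⟨⟨hzS, fun hzC => ha.2 ?_⟩, hza⟩
  rw [hC.eq_inter_singleton_add hzC]
  rw [mem_singleton_add_addSubgroup_iff] at hza
  exact ⟨ha.1, mem_singleton_add_addSubgroup_iff.mpr (by simpa using H.neg_mem hza)⟩

/-- Outside the cosets of `s` and `s'`, the set `S` lies in the remaining
`|H + S| - 2|H|` elements of `H + S`. -/
lemma lt_ncard_inter_add_ncard_inter_of_sub_notMem (hS : S.Finite) (hH : (H : Set G).Finite)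
    (hSH : ((H : Set G) + S).ncard < S.ncard + (H : Set G).ncard) {s s' : G} (hs : s ∈ S)
    (hs' : s' ∈ S) (hss' : s - s' ∉ H) :
    (H : Set G).ncard < (S ∩ ({s} + H)).ncard + (S ∩ ({s'} + H)).ncard := by
  set K := ({s} + (H : Set G)) ∪ ({s'} + H)
  have hdisj := disjoint_singleton_add_addSubgroup hss'
  have hHS : ((H : Set G) + S).Finite := hH.add hS
  have hKsub : K ⊆ H + S := union_subset (singleton_add_addSubgroup_subset_add hs)
    (singleton_add_addSubgroup_subset_add hs')
  have hKcard : K.ncard = 2 * (H : Set G).ncard := by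
    rw [ncard_union_eq hdisj (hHS.subset (subset_union_left.trans hKsub))
      (hHS.subset (subset_union_right.trans hKsub)), ncard_singleton_add, ncard_singleton_add]
    ring
  have hSK : (S ∩ K).ncard = (S ∩ ({s} + H)).ncard + (S ∩ ({s'} + H)).ncard := by
    rw [inter_union_distrib_left]
    exact ncard_union_eq (hdisj.mono inter_subset_right inter_subset_right)
      (hS.subset inter_subset_left) (hS.subset inter_subset_left)
  have hSdiff : (S \ K).ncard ≤ ((H : Set G) + S).ncard - K.ncard := by
    rw [← ncard_sdiff hKsub (hHS.subset hKsub)]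
    exact ncard_le_ncard (sdiff_subset_sdiff_left (subset_add_right S H.zero_mem)) hHS.sdiff
  have := ncard_inter_add_ncard_sdiff_eq_ncard S K hS
  have := ncard_le_ncard hKsub hHS
  omega

lemma IsSmallerComponent.lt_ncard_inter_add_ncard_inter_of_mem_diff
    (hS₀ : IsSmallerComponent H S S₀) (hS : S.Finite) (hH : (H : Set G).Finite)
    (hSH : ((H : Set G) + S).ncard < S.ncard + (H : Set G).ncard) {a t : G} (ha : a ∈ S \ S₀)
    (ht : t ∈ S) :
    (H : Set G).ncard < (S ∩ ({a} + H)).ncard + (S ∩ ({t} + H)).ncard := by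
  obtain ⟨s₀, hs₀⟩ := hS₀.1.1
  have hS₀eq := hS₀.1.eq_inter_singleton_add hs₀
  have has₀ : a - s₀ ∉ H := fun h =>
    ha.2 (hS₀eq ▸ ⟨ha.1, mem_singleton_add_addSubgroup_iff.mpr h⟩)
  have hpair :=
    lt_ncard_inter_add_ncard_inter_of_sub_notMem hS hH hSH ha.1 (hS₀eq ▸ hs₀).1 has₀
  have hmin := hS₀.2 (S ∩ ({t} + H))
    ⟨⟨t, ht, mem_singleton_add_addSubgroup_iff.mpr (by simp)⟩, t, rfl⟩
  rw [← hS₀eq] at hpair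
  omega

lemma IsSmallerComponent.diff_add_eq_diff_add_addSubgroup_add
    (hS₀ : IsSmallerComponent H S S₀) (hS : S.Finite) (hH : (H : Set G).Finite)
    (hSH : ((H : Set G) + S).ncard < S.ncard + (H : Set G).ncard) :
    (S \ S₀) + S = (S \ S₀) + H + S := by
  refine (add_subset_add_right (subset_add_left _ H.zero_mem)).antisymm ?_
  rintro _ ⟨_, ⟨a, ha, h, hh, rfl⟩, t, ht, rfl⟩
  have hcard := hS₀.lt_ncard_inter_add_ncard_inter_of_mem_diff hS hH hSH ha ht
  rw [← hS₀.1.diff_inter_singleton_add ha] at hcard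
  exact add_mem_add_of_lt_ncard_inter_add_ncard_inter hH hcard (by simpa using hh)

lemma IsSmallerComponent.sub_add_addSubgroup_eq (hS₀ : IsSmallerComponent H S S₀)
    (hS : S.Finite) (hH : (H : Set G).Finite)
    (hSH : ((H : Set G) + S).ncard < S.ncard + (H : Set G).ncard)
    (hne : (S \ S₀).Nonempty) : S - S + H = S - S := by
  refine Subset.antisymm ?_ (subset_add_left _ H.zero_mem)
  rintro _ ⟨_, ⟨a, ha, b, hb, rfl⟩, h, hh, rfl⟩
  by_cases haS₀ : a ∈ S₀
  · by_cases hbS₀ : b ∈ S₀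
    · obtain ⟨c, hc⟩ := hne
      refine sub_mem_sub_of_lt_ncard_inter_add_ncard_inter hH
        (hS₀.lt_ncard_inter_add_ncard_inter_of_mem_diff hS hH hSH hc hc.1) ?_
      simpa using H.add_mem (hS₀.1.sub_mem haS₀ hbS₀) hh
    · refine sub_mem_sub_of_lt_ncard_inter_add_ncard_inter (x := a) (y := b) hH ?_
        (by simpa using hh)
      rw [add_comm]
      exact hS₀.lt_ncard_inter_add_ncard_inter_of_mem_diff hS hH hSH ⟨hb, hbS₀⟩ ha
  · exact sub_mem_sub_of_lt_ncard_inter_add_ncard_inter hH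
      (hS₀.lt_ncard_inter_add_ncard_inter_of_mem_diff hS hH hSH ⟨ha, haS₀⟩ hb)
      (by simpa using hh)

lemma IsComponent.nonempty_diff (hC : IsComponent H S C) (h0 : (0 : G) ∈ S) (hSH : ¬ S ⊆ H) :
    (S \ C).Nonempty := by
  refine sdiff_nonempty.mpr fun hSC => hSH fun s hs => ?_
  rw [hC.eq_inter_singleton_add (hSC h0)] at hSC
  simpa [mem_singleton_add_addSubgroup_iff] using (hSC hs).2

lemma not_subset_addSubgroup_of_mem_SkAdd {k : ℕ} (hH : (H : Set G) ∈ SkAdd S k) (hk : k ≠ 0)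
    (hgen : AddSubgroup.closure S = ⊤) (h0 : (0 : G) ∈ S) : ¬ S ⊆ H := by
  intro hSH
  obtain ⟨-, -, Y, -, hYcard, hY⟩ := hH
  obtain ⟨y, hy⟩ := nonempty_of_ncard_ne_zero (hYcard ▸ hk)
  have hHtop : H = ⊤ := eq_top_iff.mpr (hgen ▸ (AddSubgroup.closure_le H).mpr hSH)
  refine hY hy (subset_add_left _ h0 ?_)
  simp [hHtop]

end Cosets

theorem stmt11_general {G : Type*} [AddCommGroup G] (S : Set G) (hfin : S.Finite)
    (h0 : (0 : G) ∈ S) (hgen : AddSubgroup.closure S = ⊤)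
    (H : AddSubgroup G) (hfrag : IsFragAdd S 1 ↑H)
    (hkappa : kappaAdd S 1 < S.ncard)
    (S₀ : Set G) (hS₀ : IsSmallerComponent H S S₀) :
    (S \ S₀) + S = (S \ S₀) + ↑H + S ∧ S - S + ↑H = S - S := by
  obtain ⟨hHk, hκ⟩ := hfrag
  have hSH : ((H : Set G) + S).ncard < S.ncard + (H : Set G).ncard := by omega
  have hne : (S \ S₀).Nonempty :=
    hS₀.1.nonempty_diff h0 (not_subset_addSubgroup_of_mem_SkAdd hHk one_ne_zero hgen h0)
  exact ⟨hS₀.diff_add_eq_diff_add_addSubgroup_add hfin hHk.1 hSH,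
    hS₀.sub_add_addSubgroup_eq hfin hHk.1 hSH hne⟩

theorem stmt11 {G : Type*} [AddCommGroup G] (S : Set G) (hfin : S.Finite)
    (h0 : (0 : G) ∈ S) (hgen : AddSubgroup.closure S = ⊤)
    (H : AddSubgroup G) (hHne : H ≠ ⊥) (hfrag : IsFragAdd S 1 ↑H)
    (hkappa : kappaAdd S 1 < S.ncard)
    (S₀ : Set G) (hS₀ : IsSmallerComponent H S S₀) :
    (S \ S₀) + S = (S \ S₀) + ↑H + S ∧ S - S + ↑H = S - S :=
  stmt11_general S hfin h0 hgen H hfrag hkappa S₀ hS₀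
end

section
/- Let G be an abelian group, S a finite subset, k ≥ 2, and H a non-zero subgroup which is a 1-fragment of S with κ₁(S) ≤ |S|−1. Let S₀ be a smaller H-component of S. If kS + H ≠ kS, then |S₀| ≤ |H|/2, every other H-component S_i (i ≥ 1) satisfies |S_i| > |H|/2, and |kS| ≥ k|S+H| − k|H| + |kS₀|. Moreover if kS is aperiodic then kS₀ is aperiodic. -/
open Set Pointwise

/-!
Write `π : G → G ⧸ H`. Since `H` is a 1-fragment and `κ₁(S) < |S|`, we have
`|S + H| < |S| + |H|`: altogether the `H`-components of `S` miss fewer than `|H|` points of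
`S + H`. So any two components lying in distinct cosets have more than `|H|` elements together,
and by pigeonhole they add up to a full coset. If moreover `2|S₀| > |H|`, then `S + S`, hence
`kS`, is `H`-periodic.

Otherwise let `S₁` be the part of `S` outside the coset `x₀ + H` of `S₀`. Then `kS = kS₀ ∪ E`
where `E = (k - 1)S + S₁` is a union of `H`-cosets, and since `kS` is not `H`-periodic, the coset
`k x₀ + H` containing `kS₀` misses `E`. Thus `π(k x₀)` has a unique representation in `k π(S)`,
Kemperman's theorem gives `|π(kS)| ≥ k |π(S)| - k + 1`, and counting `kS` coset by coset yields
the bound. Finally a period of `kS₀` lies in `H`, so it also fixes `E` and is a period of `kS`.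
-/

theorem iterSum_eq_nsmul {G : Type*} [AddCommGroup G] (S : Set G) (n : ℕ) :
    iterSum S n = n • S := by
  induction n with
  | zero => rfl
  | succ n ih => rw [iterSum, ih, succ_nsmul]

section SumsetPowers
variable {M : Type*} [AddCommMonoid M]

theorem Set.Finite.nsmul {A : Set M} (hA : A.Finite) (n : ℕ) : (n • A).Finite := by
  induction n with
  | zero => simp
  | succ n ih => rw [succ_nsmul]; exact ih.add hA

theorem succ_nsmul_union (A B : Set M) (n : ℕ) :
    (n + 1) • (A ∪ B) = (n + 1) • A ∪ (n • (A ∪ B) + B) := by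
  refine Subset.antisymm ?_ (union_subset (nsmul_subset_nsmul_left subset_union_left)
    (by rw [succ_nsmul]; exact add_subset_add_left subset_union_right))
  induction n with
  | zero => simp
  | succ n ih =>
    rintro _ ⟨u, hu, v, hv | hv, rfl⟩
    · rcases ih hu with hu | ⟨w, hw, b, hb, rfl⟩
      · exact Or.inl (add_mem_add hu hv)
      · refine Or.inr ⟨w + v, ?_, b, hb, add_right_comm _ _ _⟩
        rw [succ_nsmul]
        exact add_mem_add hw (Or.inl hv)
    · exact Or.inr (add_mem_add hu hv)

theorem succ_nsmul_eq_inter_union_sdiff (S t : Set M) (n : ℕ) :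
    (n + 1) • S = (n + 1) • (S ∩ t) ∪ (n • S + S \ t) := by
  conv_lhs => rw [← inter_union_sdiff S t]
  rw [succ_nsmul_union, inter_union_sdiff]

end SumsetPowers

section Kemperman
open scoped Finset
variable {G : Type*} [AddCommGroup G]

-- Kemperman's theorem in the case of a uniquely represented sum.
theorem card_add_card_le_card_add_add_one_of_uniqueAdd [DecidableEq G] {s t : Finset G} {a b : G}
    (ha : a ∈ s) (hb : b ∈ t) (h : UniqueAdd s t a b) : #s + #t ≤ #(s + t) + 1 := by
  induction hn : #t using Nat.strong_induction_on generalizing s t with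
  | _ n ih =>
  subst hn
  by_cases hstable : ∀ c ∈ s, ∀ d ∈ t, c - b + d ∈ s
  · -- each `d ∈ t` translates `s` onto itself, so `a + b - d ∈ s` and uniqueness forces `d = b`
    have hsingle : ∀ d ∈ t, d = b := by
      intro d hd
      have hself : s.image (· - b + d) = s :=
        Finset.eq_of_subset_of_card_le (Finset.image_subset_iff.2 fun c hc => hstable c hc d hd)
          (Finset.card_image_of_injective _ fun x y hxy => by simpa using hxy).ge
      obtain ⟨c, hc, hca⟩ := Finset.mem_image.1 (hself.symm ▸ ha : a ∈ s.image (· - b + d))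
      exact (h hc hd (by rw [← hca]; abel)).2
    have ht : #t ≤ 1 := Finset.card_le_one.2 fun d hd d' hd' => by
      rw [hsingle d hd, hsingle d' hd']
    have := Finset.card_le_card_add_right (s := s) ⟨b, hb⟩
    omega
  · push Not at hstable
    obtain ⟨c, hc, d, hd, hcd⟩ := hstable
    -- the Dyson `(c - b)`-transform keeps `b` in the second set and `a + b` uniquely represented
    let s' := s ∪ ((c - b) +ᵥ t)
    let t' := t ∩ (-(c - b) +ᵥ s)
    have mem_t' : ∀ {v}, v ∈ t' ↔ v ∈ t ∧ c - b + v ∈ s := by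
      intro v
      simp only [t', Finset.mem_inter, Finset.mem_vadd_finset, vadd_eq_add]
      exact and_congr_right fun _ => ⟨by rintro ⟨w, hw, rfl⟩; rwa [add_neg_cancel_left],
        fun hv => ⟨_, hv, by abel⟩⟩
    have hbt' : b ∈ t' := mem_t'.2 ⟨hb, by simpa using hc⟩
    have hlt : #t' < #t :=
      Finset.card_lt_card ⟨Finset.inter_subset_left, fun hsub => hcd (mem_t'.1 (hsub hd)).2⟩
    have hunique : UniqueAdd s' t' a b := by
      intro u v hu hv huv
      obtain ⟨hvt, hvs⟩ := mem_t'.1 hv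
      rcases Finset.mem_union.1 hu with hus | hut
      · exact h hus hvt huv
      · obtain ⟨w, hw, rfl⟩ := Finset.mem_vadd_finset.1 hut
        obtain ⟨-, rfl⟩ := h hvs hw (by rw [← huv, vadd_eq_add]; abel)
        obtain ⟨rfl, rfl⟩ := h hc hvt (by rw [← huv, vadd_eq_add]; abel)
        exact ⟨by rw [vadd_eq_add]; abel, rfl⟩
    have hih : #s' + #t' ≤ #(s' + t') + 1 := ih _ hlt (Finset.mem_union_left _ ha) hbt' hunique rfl
    have hsub : #(s' + t') ≤ #(s + t) :=
      Finset.card_le_card (Finset.addDysonETransform.subset (c - b) (s, t))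
    have hcard : #s' + #t' = #s + #t := Finset.addDysonETransform.card (c - b) (s, t)
    omega

theorem succ_mul_card_le_card_succ_nsmul_add [DecidableEq G] {t : Finset G} {a : G} (ha : a ∈ t)
    {n : ℕ} (h : (n + 1) • a ∉ n • t + t.erase a) : (n + 1) * #t ≤ #((n + 1) • t) + n := by
  suffices key : ∀ m ≤ n, (m + 1) * #t ≤ #((m + 1) • t) + m from key n le_rfl
  intro m
  induction m with
  | zero => simp
  | succ m ih =>
    intro hm
    have hunique : UniqueAdd ((m + 1) • t) t ((m + 1) • a) a := by
      intro u v hu hv huv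
      by_cases hva : v = a
      · subst hva
        exact ⟨add_right_cancel huv, rfl⟩
      · -- padding `u + v` with copies of `a` gives `(n + 1) • a ∈ n • t + t.erase a`
        obtain ⟨j, rfl⟩ : ∃ j, n = m + 1 + j := ⟨n - (m + 1), by omega⟩
        refine absurd (Finset.mem_add.2 ⟨u + j • a, ?_, v, Finset.mem_erase.2 ⟨hva, hv⟩, ?_⟩) h
        · rw [add_nsmul]
          exact Finset.add_mem_add hu (Finset.nsmul_mem_nsmul ha)
        · rw [show m + 1 + j + 1 = m + 1 + 1 + j by ring, add_nsmul, succ_nsmul _ (m + 1), ← huv]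
          abel
    have hstep := card_add_card_le_card_add_add_one_of_uniqueAdd
      (Finset.nsmul_mem_nsmul ha) ha hunique
    rw [← succ_nsmul] at hstep
    have := ih (by omega)
    have hexpand : (m + 1 + 1) * #t = (m + 1) * #t + #t := by ring
    omega

theorem succ_mul_ncard_le_ncard_succ_nsmul_add {T : Set G} (hT : T.Finite) {a : G} (ha : a ∈ T)
    {n : ℕ} (h : (n + 1) • a ∉ n • T + (T \ {a})) :
    (n + 1) * T.ncard ≤ ((n + 1) • T).ncard + n := by
  classical
  obtain ⟨t, rfl⟩ := hT.exists_finset_coe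
  rw [← Finset.coe_erase, ← Finset.coe_nsmul, ← Finset.coe_add, Finset.mem_coe] at h
  rw [← Finset.coe_nsmul, ncard_coe_finset, ncard_coe_finset]
  exact succ_mul_card_le_card_succ_nsmul_add ha h

end Kemperman

section Cosets
open QuotientAddGroup
variable {G : Type*} [AddCommGroup G] {H : AddSubgroup G}

theorem singleton_add_addSubgroup_eq_preimage (a : G) :
    {a} + (H : Set G) = mk ⁻¹' {(a : G ⧸ H)} := by
  rw [← image_singleton, preimage_image_mk_eq_add]

theorem ncard_add_addSubgroup (A : Set G) :
    (A + H).ncard = (H : Set G).ncard * (mk '' A : Set (G ⧸ H)).ncard :=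
  AddSubgroup.card_add_eq_card_addSubgroup_add_card_quotient H A

theorem ncard_preimage_mk_singleton (q : G ⧸ H) : (mk ⁻¹' {q}).ncard = (H : Set G).ncard := by
  obtain ⟨a, rfl⟩ := mk_surjective q
  rw [← singleton_add_addSubgroup_eq_preimage, ncard_add_addSubgroup]
  simp

theorem isComponent_iff {S C : Set G} :
    IsComponent H S C ↔ ∃ a ∈ S, C = S ∩ mk ⁻¹' {(a : G ⧸ H)} := by
  simp only [IsComponent, singleton_add_addSubgroup_eq_preimage]
  constructor
  · rintro ⟨⟨c, hc⟩, x, rfl⟩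
    obtain ⟨hcS, hcx : (c : G ⧸ H) = x⟩ := hc
    exact ⟨c, hcS, by rw [hcx]⟩
  · rintro ⟨a, ha, rfl⟩
    exact ⟨⟨a, ha, rfl⟩, a, rfl⟩

theorem nsmul_subset_preimage_nsmul {A : Set G} {q : G ⧸ H} (hA : A ⊆ mk ⁻¹' {q}) (n : ℕ) :
    n • A ⊆ mk ⁻¹' {n • q} := by
  induction n with
  | zero => simp
  | succ n ih =>
    rintro _ ⟨u, hu, a, ha, rfl⟩
    simp only [mem_preimage, mem_singleton_iff, QuotientAddGroup.mk_add, succ_nsmul] at *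
    rw [ih hu, hA ha]

theorem add_eq_preimage_of_ncard_lt (hH : (H : Set G).Finite) {A B : Set G} {p q : G ⧸ H}
    (hA : A ⊆ mk ⁻¹' {p}) (hB : B ⊆ mk ⁻¹' {q})
    (hAB : (H : Set G).ncard < A.ncard + B.ncard) : A + B = mk ⁻¹' {p + q} := by
  refine (add_subset_iff.2 fun a ha b hb => ?_).antisymm fun z hz => ?_
  · have hap : (a : G ⧸ H) = p := hA ha
    have hbq : (b : G ⧸ H) = q := hB hb
    simp [hap, hbq]
  have hcoset : (mk ⁻¹' {p} : Set G).Finite :=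
    finite_of_ncard_pos <| by
      rw [ncard_preimage_mk_singleton]
      exact (ncard_pos hH).2 ⟨0, H.zero_mem⟩
  set B' := (z - ·) '' B
  have hB' : B' ⊆ mk ⁻¹' {p} := by
    rintro _ ⟨b, hb, rfl⟩
    have hbq : (b : G ⧸ H) = q := hB hb
    have hzpq : (z : G ⧸ H) = p + q := hz
    simp [hbq, hzpq]
  have hB'card : B'.ncard = B.ncard := ncard_image_of_injective _ sub_right_injective
  obtain ⟨a, ha, b, hb, hab⟩ : (A ∩ B').Nonempty := by
    rw [← ncard_pos (hcoset.subset (inter_subset_right.trans hB'))]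
    have := ncard_union_add_ncard_inter A B' (hcoset.subset hA) (hcoset.subset hB')
    have := ncard_le_ncard (union_subset hA hB') hcoset
    rw [ncard_preimage_mk_singleton] at this
    omega
  exact ⟨a, ha, b, hb, by rw [← hab]; exact sub_add_cancel z b⟩

theorem add_add_addSubgroup_eq_of_ncard_lt (hH : (H : Set G).Finite) {A B : Set G}
    (h : ∀ a ∈ A, ∀ b ∈ B, (H : Set G).ncard <
      (A ∩ mk ⁻¹' {(a : G ⧸ H)}).ncard + (B ∩ mk ⁻¹' {(b : G ⧸ H)}).ncard) :
    A + B + H = A + B := by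
  refine (add_subset_iff.2 fun c hc x hx => ?_).antisymm (subset_add_left _ H.zero_mem)
  obtain ⟨a, ha, b, hb, rfl⟩ := hc
  have hfill := add_eq_preimage_of_ncard_lt hH inter_subset_right inter_subset_right (h a ha b hb)
  have hmem : a + b + x ∈ mk ⁻¹' {(a + b : G ⧸ H)} := by
    simp [(QuotientAddGroup.eq_zero_iff x).2 hx]
  rw [← hfill] at hmem
  exact add_subset_add inter_subset_left inter_subset_left hmem

theorem ncard_lt_ncard_inter_add_ncard_inter (hH : (H : Set G).Finite) {S : Set G}
    (hS : S.Finite) (hSH : (S + H).ncard < S.ncard + (H : Set G).ncard) {a b : G}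
    (ha : a ∈ S) (hb : b ∈ S) (hab : (a : G ⧸ H) ≠ b) :
    (H : Set G).ncard <
      (S ∩ mk ⁻¹' {(a : G ⧸ H)}).ncard + (S ∩ mk ⁻¹' {(b : G ⧸ H)}).ncard := by
  set R := S \ mk ⁻¹' {(a : G ⧸ H), (b : G ⧸ H)}
  have hcover : S ⊆ R ∪ (S ∩ mk ⁻¹' {(a : G ⧸ H)}) ∪ (S ∩ mk ⁻¹' {(b : G ⧸ H)}) := by
    intro x hx
    by_cases hxa : (x : G ⧸ H) = a
    · exact Or.inl (Or.inr ⟨hx, hxa⟩)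
    by_cases hxb : (x : G ⧸ H) = b
    · exact Or.inr ⟨hx, hxb⟩
    exact Or.inl (Or.inl ⟨hx, by simp [hxa, hxb]⟩)
  have hS_le : S.ncard ≤ R.ncard + (S ∩ mk ⁻¹' {(a : G ⧸ H)}).ncard
      + (S ∩ mk ⁻¹' {(b : G ⧸ H)}).ncard :=
    (ncard_le_ncard hcover ((hS.sdiff.union (hS.inter_of_left _)).union (hS.inter_of_left _))).trans
      ((ncard_union_le _ _).trans (by gcongr; exact ncard_union_le _ _))
  have hR_le : R.ncard ≤ (H : Set G).ncard * ((mk '' S : Set (G ⧸ H)).ncard - 2) := by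
    have hpair : {(a : G ⧸ H), (b : G ⧸ H)} ⊆ mk '' S :=
      pair_subset (mem_image_of_mem _ ha) (mem_image_of_mem _ hb)
    calc R.ncard ≤ (R + H).ncard := ncard_le_ncard (subset_add_left _ H.zero_mem) (hS.sdiff.add hH)
      _ = (H : Set G).ncard * ((mk '' S : Set (G ⧸ H)).ncard - 2) := by
        rw [ncard_add_addSubgroup, image_sdiff_preimage, ncard_sdiff hpair (toFinite _),
          ncard_pair hab]
  have hpair_le : 2 ≤ (mk '' S : Set (G ⧸ H)).ncard := by
    rw [← ncard_pair hab]
    exact ncard_le_ncard (pair_subset (mem_image_of_mem _ ha) (mem_image_of_mem _ hb)) (hS.image _)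
  rw [ncard_add_addSubgroup] at hSH
  rw [Nat.mul_sub] at hR_le
  have := Nat.mul_le_mul_left (H : Set G).ncard hpair_le
  omega

section Periodic
variable {P E : Set G} {q : G ⧸ H}

theorem notMem_image_mk_of_union_add_ne (hP : P ⊆ mk ⁻¹' {q}) (hE : E + H = E)
    (hX : P ∪ E + H ≠ P ∪ E) : q ∉ (mk '' E : Set (G ⧸ H)) := by
  rintro ⟨e, he, rfl⟩
  refine hX (Subset.antisymm (fun z hz => Or.inr ?_) (subset_add_left _ H.zero_mem))
  rw [← preimage_image_mk_eq_add, image_union] at hz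
  rw [← hE, ← preimage_image_mk_eq_add]
  rcases hz with ⟨p, hp, hpz⟩ | hz
  · rw [mem_preimage, ← hpz, hP hp]
    exact mem_image_of_mem _ he
  · exact hz

theorem ncard_add_mul_ncard_image_mk_le (hP : P ⊆ mk ⁻¹' {q}) (hE : E + H = E)
    (hX : P ∪ E + H ≠ P ∪ E) (hfin : (P ∪ E).Finite) :
    P.ncard + (H : Set G).ncard * (mk '' (P ∪ E) : Set (G ⧸ H)).ncard
      ≤ (P ∪ E).ncard + (H : Set G).ncard := by
  have hq := notMem_image_mk_of_union_add_ne hP hE hX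
  have hdisj : Disjoint P E :=
    disjoint_left.2 fun p hp hpE => hq ⟨p, hpE, hP hp⟩
  have himage : (mk '' (P ∪ E) : Set (G ⧸ H)).ncard ≤ (mk '' E : Set (G ⧸ H)).ncard + 1 := by
    refine (ncard_le_ncard ?_ (((hfin.subset subset_union_right).image _).insert q)).trans
      (ncard_insert_le _ _)
    rw [image_union]
    exact union_subset ((image_subset_iff.2 hP).trans (by simp)) (subset_insert _ _)
  have hEcard : E.ncard = (H : Set G).ncard * (mk '' E : Set (G ⧸ H)).ncard := by
    conv_lhs => rw [← hE]
    exact ncard_add_addSubgroup E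
  rw [ncard_union_eq hdisj (hfin.subset subset_union_left) (hfin.subset subset_union_right),
    hEcard]
  nlinarith

theorem singleton_add_union_eq_of_singleton_add_eq (hP : P ⊆ mk ⁻¹' {q}) (hE : E + H = E)
    {x : G} (hx : {x} + P = P) (hPne : P.Nonempty) : {x} + (P ∪ E) = P ∪ E := by
  obtain ⟨p, hp⟩ := hPne
  have hxp : x + p ∈ P := hx ▸ add_mem_add (mem_singleton x) hp
  have hx0 : (x : G ⧸ H) = 0 := by
    have h1 : ((x + p : G) : G ⧸ H) = q := hP hxp
    have h2 : (p : G ⧸ H) = q := hP hp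
    rw [QuotientAddGroup.mk_add, h2] at h1
    simpa using h1
  have hxE : {x} + E = E := by
    rw [← hE, ← preimage_image_mk_eq_add]
    ext z
    simp only [singleton_add, mem_image, mem_preimage]
    constructor
    · rintro ⟨e, he, rfl⟩
      simpa [hx0] using he
    · intro hz
      exact ⟨-x + z, by simpa [hx0] using hz, by abel⟩
  rw [add_union, hx, hxE]

end Periodic

end Cosets

section Decomposition
open QuotientAddGroup
variable {G : Type*} [AddCommGroup G] {H : AddSubgroup G} {S : Set G}

theorem succ_succ_nsmul_add_addSubgroup_eq (hH : (H : Set G).Finite)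
    (h : ∀ a ∈ S, (H : Set G).ncard < 2 * (S ∩ mk ⁻¹' {(a : G ⧸ H)}).ncard) {n : ℕ} :
    (n + 2) • S + H = (n + 2) • S := by
  rw [add_nsmul, two_nsmul, add_assoc, add_add_addSubgroup_eq_of_ncard_lt hH
    fun a ha b hb => by have := h a ha; have := h b hb; omega]

variable {x₀ : G}
  (hfill : ∀ a ∈ S, ∀ b ∈ S, (b : G ⧸ H) ≠ x₀ →
    (H : Set G).ncard < (S ∩ mk ⁻¹' {(a : G ⧸ H)}).ncard + (S ∩ mk ⁻¹' {(b : G ⧸ H)}).ncard)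
include hfill

theorem succ_nsmul_add_sdiff_add_addSubgroup_eq (hH : (H : Set G).Finite) (n : ℕ) :
    (n + 1) • S + S \ mk ⁻¹' {(x₀ : G ⧸ H)} + H = (n + 1) • S + S \ mk ⁻¹' {(x₀ : G ⧸ H)} := by
  rw [succ_nsmul, add_assoc (n • S), add_assoc (n • S), add_add_addSubgroup_eq_of_ncard_lt hH]
  rintro a ha b ⟨hb, hbx⟩
  have hcomp : (S \ mk ⁻¹' {(x₀ : G ⧸ H)}) ∩ mk ⁻¹' {(b : G ⧸ H)} = S ∩ mk ⁻¹' {(b : G ⧸ H)} := by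
    refine (inter_subset_inter_left _ sdiff_subset).antisymm fun c ⟨hc, hcb⟩ => ⟨⟨hc, ?_⟩, hcb⟩
    rwa [mem_preimage, hcb]
  rw [hcomp]
  exact hfill a ha b hb hbx

theorem mul_ncard_add_ncard_nsmul_inter_le (hH : (H : Set G).Finite) (hS : S.Finite)
    (hx₀ : x₀ ∈ S) {n : ℕ} (hne : (n + 2) • S + H ≠ (n + 2) • S) :
    (n + 2) * (S + H).ncard + ((n + 2) • (S ∩ mk ⁻¹' {(x₀ : G ⧸ H)})).ncard
      ≤ ((n + 2) • S).ncard + (n + 2) * (H : Set G).ncard := by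
  have hdecomp : (n + 2) • S = _ :=
    succ_nsmul_eq_inter_union_sdiff S (mk ⁻¹' {(x₀ : G ⧸ H)}) (n + 1)
  have hP := nsmul_subset_preimage_nsmul (inter_subset_right (s := S) (t := mk ⁻¹' {(x₀ : G ⧸ H)}))
    (n + 2)
  have hE := succ_nsmul_add_sdiff_add_addSubgroup_eq hfill hH n
  rw [hdecomp] at hne ⊢
  have hcount := ncard_add_mul_ncard_image_mk_le hP hE hne (hdecomp ▸ hS.nsmul (n + 2))
  have himage : ∀ A : Set G, ∀ m : ℕ, (mk '' (m • A) : Set (G ⧸ H)) = m • (mk '' A) :=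
    fun A m => by simpa using image_nsmul (QuotientAddGroup.mk' H) A m
  have hE_image : (mk '' ((n + 1) • S + S \ mk ⁻¹' {(x₀ : G ⧸ H)}) : Set (G ⧸ H))
      = (n + 1) • (mk '' S) + (mk '' S \ {(x₀ : G ⧸ H)}) := by
    rw [← image_sdiff_preimage, ← himage]
    simpa using image_add (QuotientAddGroup.mk' H) (s := (n + 1) • S) (t := S \ mk ⁻¹' {↑x₀})
  -- the coset of `(n + 2) • S₀` misses `E`, so `(n + 2) • π x₀` is uniquely represented
  have hkemp := succ_mul_ncard_le_ncard_succ_nsmul_add (hS.image mk) (mem_image_of_mem _ hx₀)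
    (n := n + 1) (hE_image ▸ notMem_image_mk_of_union_add_ne hP hE hne)
  rw [← himage, hdecomp] at hkemp
  rw [ncard_add_addSubgroup]
  nlinarith [Nat.mul_le_mul_left (H : Set G).ncard hkemp]

theorem IsAperiodic.of_succ_succ_nsmul (hH : (H : Set G).Finite) (hx₀ : x₀ ∈ S) {n : ℕ}
    (hap : IsAperiodic ((n + 2) • S)) : IsAperiodic ((n + 2) • (S ∩ mk ⁻¹' {(x₀ : G ⧸ H)})) := by
  intro x hx
  rw [succ_nsmul_eq_inter_union_sdiff S (mk ⁻¹' {(x₀ : G ⧸ H)}) (n + 1)] at hap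
  exact hap x (singleton_add_union_eq_of_singleton_add_eq
    (nsmul_subset_preimage_nsmul inter_subset_right (n + 2))
    (succ_nsmul_add_sdiff_add_addSubgroup_eq hfill hH n) hx
    ⟨_, nsmul_mem_nsmul (show x₀ ∈ S ∩ _ from ⟨hx₀, rfl⟩)⟩)

end Decomposition

theorem stmt12_general {G : Type*} [AddCommGroup G] (k : ℕ) (hk : 2 ≤ k)
    (S : Set G) (hfin : S.Finite)
    (H : AddSubgroup G) (hfrag : IsFragAdd S 1 ↑H)
    (hkappa : kappaAdd S 1 < S.ncard)
    (S₀ : Set G) (hS₀ : IsSmallerComponent H S S₀)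
    (hne : iterSum S k + ↑H ≠ iterSum S k) :
    2 * S₀.ncard ≤ (H : Set G).ncard ∧
    (∀ C, IsComponent H S C → C ≠ S₀ → (H : Set G).ncard < 2 * C.ncard) ∧
    k * (S + ↑H).ncard + (iterSum S₀ k).ncard ≤ (iterSum S k).ncard + k * (H : Set G).ncard ∧
    (IsAperiodic (iterSum S k) → IsAperiodic (iterSum S₀ k)) := by
  obtain ⟨n, rfl⟩ : ∃ n, k = n + 2 := ⟨k - 2, by omega⟩
  obtain ⟨⟨hH, -, -⟩, hκ⟩ := hfrag
  have hSH : (S + H).ncard < S.ncard + (H : Set G).ncard := by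
    rw [add_comm]
    omega
  obtain ⟨hS₀comp, hmin⟩ := hS₀
  obtain ⟨x₀, hx₀, rfl⟩ := isComponent_iff.1 hS₀comp
  have hmin' := fun a ha => hmin _ (isComponent_iff.2 ⟨a, ha, rfl⟩)
  have hpair := fun a (ha : a ∈ S) (hax : (a : G ⧸ H) ≠ x₀) =>
    ncard_lt_ncard_inter_add_ncard_inter hH hfin hSH ha hx₀ hax
  have hfill : ∀ a ∈ S, ∀ b ∈ S, (b : G ⧸ H) ≠ x₀ → (H : Set G).ncard <
      (S ∩ (↑) ⁻¹' {(a : G ⧸ H)}).ncard + (S ∩ (↑) ⁻¹' {(b : G ⧸ H)}).ncard :=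
    fun a ha b hb hbx => by have := hpair b hb hbx; have := hmin' a ha; omega
  simp only [iterSum_eq_nsmul] at hne ⊢
  refine ⟨?_, ?_, mul_ncard_add_ncard_nsmul_inter_le hfill hH hfin hx₀ hne,
    IsAperiodic.of_succ_succ_nsmul hfill hH hx₀⟩
  · by_contra! hlarge
    exact hne (succ_succ_nsmul_add_addSubgroup_eq hH fun a ha => by have := hmin' a ha; omega)
  · intro C hC hCne
    obtain ⟨a, ha, rfl⟩ := isComponent_iff.1 hC
    have hax : (a : G ⧸ H) ≠ x₀ := fun h => hCne (by rw [h])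
    have := hpair a ha hax
    have := hmin' a ha
    omega

theorem stmt12 {G : Type*} [AddCommGroup G] (k : ℕ) (hk : 2 ≤ k)
    (S : Set G) (hfin : S.Finite)
    (H : AddSubgroup G) (hHne : H ≠ ⊥) (hfrag : IsFragAdd S 1 ↑H)
    (hkappa : kappaAdd S 1 < S.ncard)
    (S₀ : Set G) (hS₀ : IsSmallerComponent H S S₀)
    (hne : iterSum S k + ↑H ≠ iterSum S k) :
    2 * S₀.ncard ≤ (H : Set G).ncard ∧
    (∀ C, IsComponent H S C → C ≠ S₀ → (H : Set G).ncard < 2 * C.ncard) ∧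
    k * (S + ↑H).ncard + (iterSum S₀ k).ncard ≤ (iterSum S k).ncard + k * (H : Set G).ncard ∧
    (IsAperiodic (iterSum S k) → IsAperiodic (iterSum S₀ k)) :=
  stmt12_general k hk S hfin H hfrag hkappa S₀ hS₀ hne
end
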